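/- The 3-dimensional complex algebras L₅ (basis e₁,e₂,e₃, nonzero products e₂e₂ = e₁, e₃e₃ = e₁) and L₁₁ (only nonzero product e₃e₃ = e₁) are not isomorphic, since the right annihilator of L₅ has dimension 1 while the right annihilator of L₁₁ has dimension 2. -/
import Mathlib


/-- Multiplication of `L₅` on `ℂ³`: nonzero products `e₂e₂ = e₁`, `e₃e₃ = e₁`. -/
def mulL5 (a b : Fin 3 → ℂ) : Fin 3 → ℂ :=
  ![a 1 * b 1 + a 2 * b 2, 0, 0]

/-- Multiplication of `L₁₁` on `ℂ³`: only nonzero product `e₃e₃ = e₁`. -/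
def mulL11 (a b : Fin 3 → ℂ) : Fin 3 → ℂ :=
  ![a 2 * b 2, 0, 0]

/-- The right annihilator of `L₅`. -/
noncomputable def annL5 : Submodule ℂ (Fin 3 → ℂ) where
  carrier := {a | ∀ b, mulL5 b a = 0}
  add_mem' := by
    intro a b ha hb
    intro c
    have h1 := congrFun (ha c) 0
    have h2 := congrFun (hb c) 0
    funext i
    fin_cases i <;> simp [mulL5, -mul_eq_zero] at h1 h2 ⊢ <;> linear_combination h1 + h2
  zero_mem' := by
    intro c
    funext i
    fin_cases i <;> simp [mulL5]
  smul_mem' := by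
    intro r a ha c
    have h1 := congrFun (ha c) 0
    funext i
    fin_cases i <;> simp [mulL5, -mul_eq_zero] at h1 ⊢ <;> linear_combination r * h1

/-- The right annihilator of `L₁₁`. -/
noncomputable def annL11 : Submodule ℂ (Fin 3 → ℂ) where
  carrier := {a | ∀ b, mulL11 b a = 0}
  add_mem' := by
    intro a b ha hb
    intro c
    have h1 := congrFun (ha c) 0
    have h2 := congrFun (hb c) 0
    funext i
    fin_cases i <;> simp [mulL11, -mul_eq_zero] at h1 h2 ⊢ <;> linear_combination h1 + h2
  zero_mem' := by
    intro c
    funext i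
    fin_cases i <;> simp [mulL11]
  smul_mem' := by
    intro r a ha c
    have h1 := congrFun (ha c) 0
    funext i
    fin_cases i <;> simp [mulL11, -mul_eq_zero] at h1 ⊢ <;> linear_combination r * h1

lemma mem_annL5 (a : Fin 3 → ℂ) : a ∈ annL5 ↔ a 1 = 0 ∧ a 2 = 0 := by
  constructor
  · intro ha
    have h1 := congrFun (ha ![0,1,0]) 0
    have h2 := congrFun (ha ![0,0,1]) 0
    simp [mulL5] at h1 h2
    exact ⟨h1, h2⟩
  · rintro ⟨h1, h2⟩ b
    funext i
    fin_cases i <;> simp [mulL5, h1, h2]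

lemma mem_annL11 (a : Fin 3 → ℂ) : a ∈ annL11 ↔ a 2 = 0 := by
  constructor
  · intro ha
    have h2 := congrFun (ha ![0,0,1]) 0
    simpa [mulL11] using h2
  · intro h2 b
    funext i
    fin_cases i <;> simp [mulL11, h2]

lemma finrank_annL5 : Module.finrank ℂ annL5 = 1 := by
  have heq : annL5 = LinearMap.ker
      ((LinearMap.proj 1 : (Fin 3 → ℂ) →ₗ[ℂ] ℂ).prod (LinearMap.proj 2)) := by
    ext a
    simp [mem_annL5, LinearMap.mem_ker, Prod.ext_iff]
  set f := ((LinearMap.proj 1 : (Fin 3 → ℂ) →ₗ[ℂ] ℂ).prod (LinearMap.proj 2))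
  have hsurj : Function.Surjective f := by
    rintro ⟨x, y⟩
    exact ⟨![0, x, y], by simp [f]⟩
  have hrange : LinearMap.range f = ⊤ := LinearMap.range_eq_top.mpr hsurj
  have := LinearMap.finrank_range_add_finrank_ker f
  rw [hrange] at this
  simp only [finrank_top, Module.finrank_prod, Module.finrank_self,
    Module.finrank_fintype_fun_eq_card, Fintype.card_fin] at this
  rw [heq]
  omega

lemma finrank_annL11 : Module.finrank ℂ annL11 = 2 := by
  have heq : annL11 = LinearMap.ker (LinearMap.proj 2 : (Fin 3 → ℂ) →ₗ[ℂ] ℂ) := by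
    ext a
    simp [mem_annL11, LinearMap.mem_ker]
  set f := (LinearMap.proj 2 : (Fin 3 → ℂ) →ₗ[ℂ] ℂ)
  have hsurj : Function.Surjective f := fun x => ⟨![0, 0, x], by simp [f]⟩
  have hrange : LinearMap.range f = ⊤ := LinearMap.range_eq_top.mpr hsurj
  have := LinearMap.finrank_range_add_finrank_ker f
  rw [hrange] at this
  simp only [finrank_top, Module.finrank_self,
    Module.finrank_fintype_fun_eq_card, Fintype.card_fin] at this
  rw [heq]
  omega

/-- `L₅` and `L₁₁` are not isomorphic as algebras; indeed the right annihilator of `L₅`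
has dimension `1` while that of `L₁₁` has dimension `2`. -/
theorem L5_not_iso_L11 :
    (¬ ∃ g : (Fin 3 → ℂ) ≃ₗ[ℂ] (Fin 3 → ℂ),
        ∀ x y : Fin 3 → ℂ, g (mulL5 x y) = mulL11 (g x) (g y)) ∧
    Module.finrank ℂ annL5 = 1 ∧ Module.finrank ℂ annL11 = 2 := by
  refine ⟨?_, finrank_annL5, finrank_annL11⟩
  rintro ⟨g, hg⟩
  have key : annL11 = annL5.map (g : (Fin 3 → ℂ) →ₗ[ℂ] (Fin 3 → ℂ)) := by
    ext x
    simp only [Submodule.mem_map, LinearEquiv.coe_coe]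
    constructor
    · intro hx
      refine ⟨g.symm x, fun b => ?_, g.apply_symm_apply x⟩
      have : g (mulL5 b (g.symm x)) = 0 := by
        rw [hg, g.apply_symm_apply]
        exact hx (g b)
      exact (map_eq_zero_iff g g.injective).mp this
    · rintro ⟨a, ha, rfl⟩ c
      have : mulL11 c (g a) = g (mulL5 (g.symm c) a) := by
        rw [hg, g.apply_symm_apply]
      rw [this, ha (g.symm c), map_zero]
  have hfin : Module.finrank ℂ (annL5.map (g : (Fin 3 → ℂ) →ₗ[ℂ] (Fin 3 → ℂ)))
      = Module.finrank ℂ annL5 := LinearEquiv.finrank_map_eq g annL5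
  rw [← key, finrank_annL11, finrank_annL5] at hfin
  exact absurd hfin (by norm_num)
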